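/- arXiv:1711.00121 — 6 statements merged into one kernel-verified Lean document; each statement's English description precedes it below -/
import Mathlib

section
/- Let 0 < C < 1, let Q and Q̃ = Q + u v^T be n×n matrices with ‖Q‖ ≤ 1 and ‖Q̃‖ ≤ 1 in the spectral norm, and let S be the unique solution of S = C·Q S Q^T + (1−C)·I_n, and S̃ the unique solution of S̃ = C·Q̃ S̃ Q̃^T + (1−C)·I_n. Set z = S v, y = Q z, λ = v^T z, and w = y + (λ/2) u. Then the change ΔS = S̃ − S satisfies ΔS = M + M^T where M is the unique solution of the rank-one Sylvester equation M = C·Q̃ M Q̃^T + C·u w^T. -/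
/-!
The map `X ↦ X - C • (R * X * Rᵀ)` is injective as soon as `|C| * ‖R‖² < 1`, hence bijective, so
every Stein equation `X = C • (R * X * Rᵀ) + A` has exactly one solution. Solutions are additive
in `A` and commute with transposition, and for symmetric `S` the congruence by `Q̃ = Q + u vᵀ`
changes `Q S Qᵀ` by the symmetric rank-two term `u wᵀ + w uᵀ`. Subtracting the two SimRank
equations then shows that `S̃ - S` and `M + Mᵀ` solve the same Stein equation.
-/

open Matrix
open scoped Matrix.Norms.L2Operator

namespace Matrix

section CommRing

variable {ι α : Type*} [Fintype ι] [CommRing α]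

lemma transpose_eq_smul_mul_mul_transpose_add {C : α} {R X A : Matrix ι ι α}
    (hX : X = C • (R * X * Rᵀ) + A) : Xᵀ = C • (R * Xᵀ * Rᵀ) + Aᵀ := by
  conv_lhs => rw [hX]
  rw [transpose_add, transpose_smul, transpose_mul, transpose_mul, transpose_transpose,
    Matrix.mul_assoc]

lemma add_eq_smul_mul_mul_transpose_add {C : α} {R X Y A B : Matrix ι ι α}
    (hX : X = C • (R * X * Rᵀ) + A) (hY : Y = C • (R * Y * Rᵀ) + B) :
    X + Y = C • (R * (X + Y) * Rᵀ) + (A + B) := by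
  conv_lhs => rw [hX, hY]
  rw [Matrix.mul_add, Matrix.add_mul, smul_add]
  abel

lemma sub_eq_smul_mul_mul_transpose_add {C : α} {R R' X X' A : Matrix ι ι α}
    (hX : X = C • (R * X * Rᵀ) + A) (hX' : X' = C • (R' * X' * R'ᵀ) + A) :
    X' - X = C • (R' * (X' - X) * R'ᵀ) + C • (R' * X * R'ᵀ - R * X * Rᵀ) := by
  conv_lhs => rw [hX, hX']
  rw [Matrix.mul_sub, Matrix.sub_mul, smul_sub, smul_sub]
  abel

lemma add_vecMulVec_mul_mul_transpose_add_vecMulVec {Q S : Matrix ι ι α} (hS : Sᵀ = S)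
    (u v : ι → α) :
    (Q + vecMulVec u v) * S * (Q + vecMulVec u v)ᵀ = Q * S * Qᵀ
      + (vecMulVec (Q *ᵥ (S *ᵥ v)) u + vecMulVec u (Q *ᵥ (S *ᵥ v))
        + (v ⬝ᵥ S *ᵥ v) • vecMulVec u u) := by
  simp only [transpose_add, transpose_vecMulVec, Matrix.add_mul, Matrix.mul_add, mul_vecMulVec,
    vecMulVec_mul, ← mulVec_transpose, hS, transpose_transpose, add_mulVec, ← mulVec_mulVec,
    vecMulVec_mulVec, op_smul_eq_smul, add_vecMulVec, smul_vecMulVec, dotProduct_comm (S *ᵥ v)]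
  abel

end CommRing

lemma vecMulVec_add_vecMulVec_add_smul_eq_add_transpose {ι α : Type*} [Field α] [NeZero (2 : α)]
    (u y : ι → α) (l : α) :
    vecMulVec y u + vecMulVec u y + l • vecMulVec u u
      = vecMulVec u (y + (l / 2) • u) + (vecMulVec u (y + (l / 2) • u))ᵀ := by
  rw [transpose_vecMulVec, vecMulVec_add, add_vecMulVec, vecMulVec_smul, smul_vecMulVec]
  conv_lhs => rw [← add_halves l, add_smul]
  abel

section Real

variable {ι : Type*} [Fintype ι] [DecidableEq ι]

lemma l2_opNorm_transpose_real (A : Matrix ι ι ℝ) : ‖Aᵀ‖ = ‖A‖ := by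
  rw [← conjTranspose_eq_transpose_of_trivial]
  exact l2_opNorm_conjTranspose A

lemma eq_zero_of_eq_smul_mul_mul_transpose {C : ℝ} {R X : Matrix ι ι ℝ}
    (hCR : |C| * ‖R‖ ^ 2 < 1) (hX : X = C • (R * X * Rᵀ)) : X = 0 := by
  have hle : ‖X‖ ≤ |C| * ‖R‖ ^ 2 * ‖X‖ :=
    calc ‖X‖ = |C| * ‖R * X * Rᵀ‖ := by rw [← Real.norm_eq_abs, ← norm_smul, ← hX]
      _ ≤ |C| * (‖R‖ * ‖X‖ * ‖Rᵀ‖) := by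
        gcongr
        exact (l2_opNorm_mul _ _).trans (by gcongr; exact l2_opNorm_mul _ _)
      _ = |C| * ‖R‖ ^ 2 * ‖X‖ := by rw [l2_opNorm_transpose_real]; ring
  exact norm_le_zero_iff.mp (by nlinarith [norm_nonneg X])

def steinMap (C : ℝ) (R : Matrix ι ι ℝ) : Matrix ι ι ℝ →ₗ[ℝ] Matrix ι ι ℝ where
  toFun X := X - C • (R * X * Rᵀ)
  map_add' X Y := by
    simp only [Matrix.add_mul, Matrix.mul_add, smul_add]
    abel
  map_smul' c X := by
    simp only [Matrix.mul_smul, Matrix.smul_mul, smul_sub, RingHom.id_apply, smul_comm C c]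

lemma steinMap_bijective {C : ℝ} {R : Matrix ι ι ℝ} (hCR : |C| * ‖R‖ ^ 2 < 1) :
    Function.Bijective (steinMap C R) := by
  have hinj : Function.Injective (steinMap C R) :=
    (injective_iff_map_eq_zero _).mpr fun X hX =>
      eq_zero_of_eq_smul_mul_mul_transpose hCR (sub_eq_zero.mp hX)
  exact ⟨hinj, LinearMap.injective_iff_surjective.mp hinj⟩

lemma existsUnique_eq_smul_mul_mul_transpose_add {C : ℝ} {R : Matrix ι ι ℝ}
    (hCR : |C| * ‖R‖ ^ 2 < 1) (A : Matrix ι ι ℝ) :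
    ∃! X : Matrix ι ι ℝ, X = C • (R * X * Rᵀ) + A := by
  have hiff : ∀ X, X = C • (R * X * Rᵀ) + A ↔ steinMap C R X = A := fun X =>
    sub_eq_iff_eq_add'.symm
  simpa only [hiff] using (steinMap_bijective hCR).existsUnique A

end Real

end Matrix

/-- for a rank-one update `Q̃ = Q + u vᵀ` of the transition matrix, the SimRank
change `ΔS = S̃ - S` satisfies `ΔS = M + Mᵀ`, where `M` is the unique solution of the rank-one
Sylvester equation `M = C·Q̃ M Q̃ᵀ + C·u wᵀ` with `w = Q S v + ((vᵀ S v)/2) u`. -/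
theorem simrank_rankone_update {n : ℕ} (C : ℝ) (hC0 : 0 < C) (hC1 : C < 1)
    (Q Qt S St : Matrix (Fin n) (Fin n) ℝ) (u v : Fin n → ℝ)
    (hQt : Qt = Q + vecMulVec u v)
    (hQnorm : ‖Q‖ ≤ 1) (hQtnorm : ‖Qt‖ ≤ 1)
    (hS : S = C • (Q * S * Qᵀ) + (1 - C) • (1 : Matrix (Fin n) (Fin n) ℝ))
    (hSt : St = C • (Qt * St * Qtᵀ) + (1 - C) • (1 : Matrix (Fin n) (Fin n) ℝ))
    (z : Fin n → ℝ) (hz : z = S *ᵥ v)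
    (y : Fin n → ℝ) (hy : y = Q *ᵥ z)
    (lam : ℝ) (hlam : lam = v ⬝ᵥ z)
    (w : Fin n → ℝ) (hw : w = y + (lam / 2) • u) :
    (∃! M : Matrix (Fin n) (Fin n) ℝ,
        M = C • (Qt * M * Qtᵀ) + C • vecMulVec u w) ∧
    ∀ M : Matrix (Fin n) (Fin n) ℝ,
      M = C • (Qt * M * Qtᵀ) + C • vecMulVec u w → St - S = M + Mᵀ := by
  have hcontract : ∀ R : Matrix (Fin n) (Fin n) ℝ, ‖R‖ ≤ 1 → |C| * ‖R‖ ^ 2 < 1 := fun R hR => by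
    rw [abs_of_pos hC0]
    exact mul_lt_one_of_nonneg_of_lt_one_left hC0.le hC1 (pow_le_one₀ (norm_nonneg R) hR)
  have hunique := existsUnique_eq_smul_mul_mul_transpose_add (hcontract Qt hQtnorm)
  refine ⟨hunique _, fun M hM => (hunique (C • (vecMulVec u w + (vecMulVec u w)ᵀ))).unique ?_ ?_⟩
  · have hS_symm : Sᵀ = S :=
      (existsUnique_eq_smul_mul_mul_transpose_add (hcontract Q hQnorm) _).unique
        (by simpa only [transpose_smul, transpose_one] using
          transpose_eq_smul_mul_mul_transpose_add hS) hS
    have hcongr : Qt * S * Qtᵀ - Q * S * Qᵀ = vecMulVec u w + (vecMulVec u w)ᵀ := by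
      rw [hQt, add_vecMulVec_mul_mul_transpose_add_vecMulVec hS_symm, add_sub_cancel_left, ← hz,
        ← hy, ← hlam, vecMulVec_add_vecMulVec_add_smul_eq_add_transpose, ← hw]
    rw [← hcongr]
    exact sub_eq_smul_mul_mul_transpose_add hS hSt
  · simpa only [transpose_smul, smul_add] using
      add_eq_smul_mul_mul_transpose_add hM (transpose_eq_smul_mul_mul_transpose_add hM)
end

section
/- Let S̃_11 ∈ R^{n×n} solve the equation S̃_11 = C Q̂ S̃_11 Q̂^T + ((1−C)C/(d_j+1)²) e_j e_j^T + (1−C) I_n, and let S solve S = C Q S Q^T + (1−C) I_n, where Q̂ = Q − (1/(d_j+1)) e_j [Q]_{j,·}. Then ΔS̃_11 := S̃_11 − S satisfies ΔS̃_11 = C Q̂ ΔS̃_11 Q̂^T + (C/(d_j+1))(e_j z^T + z e_j^T), where z = α e_j − y, y = Q S ([Q]_{j,·})^T, and α = (y_j + 1 − C)/(2(d_j+1)). -/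
/-!
Subtracting the two fixed-point equations gives
`ΔS̃₁₁ = C Q̂ ΔS̃₁₁ Q̂ᵀ + C (Q̂ S Q̂ᵀ - Q S Qᵀ) + ((1 - C) C / (d_j + 1)²) e_j e_jᵀ`.
As `Q̂` is a rank-one update of `Q` and `S` is symmetric, `Q̂ S Q̂ᵀ - Q S Qᵀ` is
`-(e_j yᵀ + y e_jᵀ) / (d_j + 1) + y_j e_j e_jᵀ / (d_j + 1)²`, where `y_j = [Q]_{j,·} S [Q]_{j,·}ᵀ`;
the two `e_j e_jᵀ` terms combine into `2α e_j e_jᵀ / (d_j + 1)`, which is exactly what the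
`α e_j` part of `z` contributes to `e_j zᵀ + z e_jᵀ`.
-/

open Matrix

theorem sub_smul_vecMulVec_mul_mul_transpose_sub {m n R : Type*} [Fintype n] [CommRing R]
    (M : Matrix m n R) {S : Matrix n n R} (hS : S.IsSymm) (c : R) (e : m → R) (r : n → R) :
    (M - c • vecMulVec e r) * S * (M - c • vecMulVec e r)ᵀ =
      M * S * Mᵀ - c • (vecMulVec e (M *ᵥ S *ᵥ r) + vecMulVec (M *ᵥ S *ᵥ r) e) +
        (c ^ 2 * (r ⬝ᵥ S *ᵥ r)) • vecMulVec e e := by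
  have hrS : r ᵥ* S = S *ᵥ r := by rw [← mulVec_transpose, hS.eq]
  have hleft : vecMulVec e r * S * Mᵀ = vecMulVec e (M *ᵥ S *ᵥ r) := by
    rw [vecMulVec_mul, vecMulVec_mul, hrS, vecMul_transpose]
  have hright : M * S * vecMulVec r e = vecMulVec (M *ᵥ S *ᵥ r) e := by
    rw [Matrix.mul_assoc, mul_vecMulVec, mul_vecMulVec]
  have hboth : vecMulVec e r * S * vecMulVec r e = (r ⬝ᵥ S *ᵥ r) • vecMulVec e e := by
    rw [vecMulVec_mul, hrS, vecMulVec_mul_vecMulVec, vecMulVec_smul, dotProduct_comm]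
  simp only [transpose_sub, transpose_smul, transpose_vecMulVec, Matrix.sub_mul, Matrix.mul_sub,
    Matrix.smul_mul, Matrix.mul_smul, hleft, hright, hboth]
  module

theorem vecMulVec_add_vecMulVec_smul_sub {m R : Type*} [CommRing R] (e y : m → R) (α : R) :
    vecMulVec e (α • e - y) + vecMulVec (α • e - y) e =
      (2 * α) • vecMulVec e e - (vecMulVec e y + vecMulVec y e) := by
  rw [vecMulVec_sub, sub_vecMulVec, vecMulVec_smul, smul_vecMulVec]
  module

theorem simrank_new_source_node_rank_two_sylvester_general {n : ℕ} (C : ℝ)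
    (dj : ℕ)
    (Q S St11 Qh : Matrix (Fin n) (Fin n) ℝ) (j : Fin n)
    (hSsym : S.IsSymm)
    (hQh : Qh = Q - ((dj : ℝ) + 1)⁻¹ •
      vecMulVec (Pi.single j 1 : Fin n → ℝ) (fun k => Q j k))
    (hS : S = C • (Q * S * Qᵀ) + (1 - C) • (1 : Matrix (Fin n) (Fin n) ℝ))
    (hSt : St11 = C • (Qh * St11 * Qhᵀ) +
      ((1 - C) * C / ((dj : ℝ) + 1) ^ 2) •
        vecMulVec (Pi.single j 1 : Fin n → ℝ) (Pi.single j 1 : Fin n → ℝ) +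
      (1 - C) • (1 : Matrix (Fin n) (Fin n) ℝ))
    (y : Fin n → ℝ) (hy : y = Q *ᵥ (S *ᵥ (fun k => Q j k)))
    (α : ℝ) (hα : α = (y j + 1 - C) / (2 * ((dj : ℝ) + 1)))
    (z : Fin n → ℝ) (hz : z = α • (Pi.single j 1 : Fin n → ℝ) - y) :
    St11 - S = C • (Qh * (St11 - S) * Qhᵀ) +
      (C / ((dj : ℝ) + 1)) •
        (vecMulVec (Pi.single j 1 : Fin n → ℝ) z +
          vecMulVec z (Pi.single j 1 : Fin n → ℝ)) := by
  have hyj : (fun k => Q j k) ⬝ᵥ S *ᵥ (fun k => Q j k) = y j := by rw [hy]; rfl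
  have hupdate := sub_smul_vecMulVec_mul_mul_transpose_sub Q hSsym ((dj : ℝ) + 1)⁻¹
    (Pi.single j 1) (fun k => Q j k)
  rw [← hQh, ← hy, hyj] at hupdate
  conv_lhs => rw [hSt, hS]
  rw [Matrix.mul_sub, Matrix.sub_mul, hupdate, hz, vecMulVec_add_vecMulVec_smul_sub, hα]
  -- so that `module` treats `(dj + 1)⁻¹` as an atom rather than the inverse of a sum
  generalize (dj : ℝ) + 1 = x
  module

/-- rank-two Sylvester equation for the SimRank change when inserting an edge
`(i,j)` from a brand-new node `i` to an existing node `j` of in-degree `d_j`. With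
`Q̂ = Q - (1/(d_j+1)) e_j [Q]_{j,·}`, `y = Q S ([Q]_{j,·})ᵀ`, `α = (y_j + 1 - C)/(2(d_j+1))`,
and `z = α e_j - y`, the difference `ΔS̃₁₁ = S̃₁₁ - S` satisfies
`ΔS̃₁₁ = C Q̂ ΔS̃₁₁ Q̂ᵀ + (C/(d_j+1))(e_j zᵀ + z e_jᵀ)`. -/
theorem simrank_new_source_node_rank_two_sylvester {n : ℕ} (C : ℝ)
    (hC0 : 0 < C) (hC1 : C < 1) (dj : ℕ)
    (Q S St11 Qh : Matrix (Fin n) (Fin n) ℝ) (j : Fin n)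
    (hSsym : S.IsSymm)
    (hQh : Qh = Q - ((dj : ℝ) + 1)⁻¹ •
      vecMulVec (Pi.single j 1 : Fin n → ℝ) (fun k => Q j k))
    (hS : S = C • (Q * S * Qᵀ) + (1 - C) • (1 : Matrix (Fin n) (Fin n) ℝ))
    (hSt : St11 = C • (Qh * St11 * Qhᵀ) +
      ((1 - C) * C / ((dj : ℝ) + 1) ^ 2) •
        vecMulVec (Pi.single j 1 : Fin n → ℝ) (Pi.single j 1 : Fin n → ℝ) +
      (1 - C) • (1 : Matrix (Fin n) (Fin n) ℝ))
    (y : Fin n → ℝ) (hy : y = Q *ᵥ (S *ᵥ (fun k => Q j k)))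
    (α : ℝ) (hα : α = (y j + 1 - C) / (2 * ((dj : ℝ) + 1)))
    (z : Fin n → ℝ) (hz : z = α • (Pi.single j 1 : Fin n → ℝ) - y) :
    St11 - S = C • (Qh * (St11 - S) * Qhᵀ) +
      (C / ((dj : ℝ) + 1)) •
        (vecMulVec (Pi.single j 1 : Fin n → ℝ) z +
          vecMulVec z (Pi.single j 1 : Fin n → ℝ)) :=
  simrank_new_source_node_rank_two_sylvester_general C dj Q S St11 Qh j hSsym hQh hS hSt y hy α hα z
    hz
end

section
/- Let G be a graph with transition matrix Q and SimRank matrix S solving S = C Q S Q^T + (1−C) I_n. Insert an edge (i,j) where both endpoints i (index n+1) and j (index n+2) are new nodes, giving new transition matrix Q̃ = diag(Q, N) with N = [[0,0],[1,0]]. Then the new SimRank matrix is S̃ = diag(S, Ŝ) where Ŝ = [[1−C, 0],[0, 1−C²]], i.e., this block-diagonal matrix solves S̃ = C Q̃ S̃ Q̃^T + (1−C) I_{n+2}. -/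
open Matrix

def IsSimRankMatrix {R m : Type*} [CommRing R] [Fintype m] [DecidableEq m]
    (C : R) (Q S : Matrix m m R) : Prop :=
  S = C • (Q * S * Qᵀ) + (1 - C) • (1 : Matrix m m R)

namespace IsSimRankMatrix

variable {R m n : Type*} [CommRing R] [Fintype m] [Fintype n] [DecidableEq m] [DecidableEq n]
  {C : R}

theorem fromBlocks {Q₁ S₁ : Matrix m m R} {Q₂ S₂ : Matrix n n R}
    (h₁ : IsSimRankMatrix C Q₁ S₁) (h₂ : IsSimRankMatrix C Q₂ S₂) :
    IsSimRankMatrix C (fromBlocks Q₁ 0 0 Q₂) (fromBlocks S₁ 0 0 S₂) := by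
  unfold IsSimRankMatrix at *
  rw [fromBlocks_transpose, fromBlocks_multiply, fromBlocks_multiply, ← fromBlocks_one,
    fromBlocks_smul, fromBlocks_smul, fromBlocks_add]
  congr 1 <;> simp [← h₁, ← h₂]

theorem single_edge (C : R) :
    IsSimRankMatrix C !![0, 0; 1, 0] !![1 - C, 0; 0, 1 - C ^ 2] := by
  unfold IsSimRankMatrix
  ext i j
  fin_cases i <;> fin_cases j <;>
    simp [vecMul, dotProduct, Fin.sum_univ_two]
  ring

end IsSimRankMatrix

theorem simrank_new_component_general {n : ℕ} (C : ℝ)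
    (Q S : Matrix (Fin n) (Fin n) ℝ)
    (hS : S = C • (Q * S * Qᵀ) + (1 - C) • (1 : Matrix (Fin n) (Fin n) ℝ))
    (N : Matrix (Fin 2) (Fin 2) ℝ) (hN : N = !![0, 0; 1, 0])
    (Sh : Matrix (Fin 2) (Fin 2) ℝ) (hSh : Sh = !![1 - C, 0; 0, 1 - C ^ 2])
    (Qt St : Matrix (Fin n ⊕ Fin 2) (Fin n ⊕ Fin 2) ℝ)
    (hQt : Qt = fromBlocks Q 0 0 N)
    (hSt : St = fromBlocks S 0 0 Sh) :
    St = C • (Qt * St * Qtᵀ) + (1 - C) • (1 : Matrix (Fin n ⊕ Fin 2) (Fin n ⊕ Fin 2) ℝ) := by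
  subst hQt hSt hN hSh
  exact IsSimRankMatrix.fromBlocks hS (IsSimRankMatrix.single_edge C)

/-- inserting an edge `(i,j)` where both endpoints are new nodes gives
`Q̃ = diag(Q, N)` with `N = [[0,0],[1,0]]`, and the block-diagonal matrix
`S̃ = diag(S, Ŝ)` with `Ŝ = [[1-C,0],[0,1-C²]]` solves the new SimRank equation. -/
theorem simrank_new_component {n : ℕ} (C : ℝ) (hC0 : 0 < C) (hC1 : C < 1)
    (Q S : Matrix (Fin n) (Fin n) ℝ)
    (hS : S = C • (Q * S * Qᵀ) + (1 - C) • (1 : Matrix (Fin n) (Fin n) ℝ))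
    (N : Matrix (Fin 2) (Fin 2) ℝ) (hN : N = !![0, 0; 1, 0])
    (Sh : Matrix (Fin 2) (Fin 2) ℝ) (hSh : Sh = !![1 - C, 0; 0, 1 - C ^ 2])
    (Qt St : Matrix (Fin n ⊕ Fin 2) (Fin n ⊕ Fin 2) ℝ)
    (hQt : Qt = fromBlocks Q 0 0 N)
    (hSt : St = fromBlocks S 0 0 Sh) :
    St = C • (Qt * St * Qtᵀ) + (1 - C) • (1 : Matrix (Fin n ⊕ Fin 2) (Fin n ⊕ Fin 2) ℝ) :=
  simrank_new_component_general C Q S hS N hN Sh hSh Qt St hQt hSt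
end

section
/- Let Q = [[0,1],[0,0]] with reduced SVD U = (1,0)^T, Σ = (1), V = (0,1)^T, and let ΔQ = [[0,0],[1,0]]. Define C = Σ + U^T ΔQ V (which equals (1)), with (trivial) SVD U_C = Σ_C = V_C = (1). Then the updated factors Ũ = U U_C, Σ̃ = Σ_C, Ṽ = V V_C satisfy Ũ Σ̃ Ṽ^T = [[0,1],[0,0]] ≠ Q + ΔQ = [[0,1],[1,0]], and the spectral-norm error ‖(Q+ΔQ) − Ũ Σ̃ Ṽ^T‖_2 = 1. -/
open Matrix
open scoped Matrix.Norms.L2Operator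

/-!
Whenever `U_C Σ_C V_Cᵀ = C`, the updated product is `U C Vᵀ = U Σ Vᵀ + U (Uᵀ ΔQ V) Vᵀ`: the
update only sees the compression of `ΔQ` to the column spaces of `U` and `V`. Here
`ΔQ = e₂ e₁ᵀ` is orthogonal to both, so `Uᵀ ΔQ V = 0`, the update returns `Q` itself, and the
error is the matrix unit `ΔQ`, whose spectral norm is `1` by the C⋆-identity `‖A‖² = ‖Aᴴ A‖`.
-/

namespace Matrix

variable {R : Type*} [CommSemiring R] {m n k : Type*} [Fintype m] [Fintype n] [Fintype k]

theorem incremental_update_eq {U : Matrix m k R} {V : Matrix n k R} {Sig UC SC VC : Matrix k k R}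
    {dQ : Matrix m n R} (hC : UC * SC * VCᵀ = Sig + Uᵀ * dQ * V) :
    U * UC * SC * (V * VC)ᵀ = U * Sig * Vᵀ + U * (Uᵀ * dQ * V) * Vᵀ := by
  calc U * UC * SC * (V * VC)ᵀ = U * (UC * SC * VCᵀ) * Vᵀ := by
        simp only [transpose_mul, Matrix.mul_assoc]
    _ = _ := by rw [hC, Matrix.mul_add, Matrix.add_mul]

variable {𝕜 : Type*} [RCLike 𝕜] [DecidableEq m] [DecidableEq n]

theorem l2_opNorm_single (i : m) (j : n) (c : 𝕜) : ‖(single i j c : Matrix m n 𝕜)‖ = ‖c‖ := by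
  have hsq : ‖(single i j c : Matrix m n 𝕜)‖ * ‖(single i j c : Matrix m n 𝕜)‖ = ‖c‖ * ‖c‖ := by
    rw [← l2_opNorm_conjTranspose_mul_self, conjTranspose_single, single_mul_single_same,
      ← diagonal_single, l2_opNorm_diagonal, Pi.norm_single, norm_mul, norm_star]
  exact mul_self_inj (norm_nonneg _) (norm_nonneg _) |>.mp hsq

end Matrix

/-- the concrete counterexample to Li et al.'s incremental SVD update.
With `Q = [[0,1],[0,0]]`, reduced SVD `U = (1,0)ᵀ, Σ = (1), V = (0,1)ᵀ`, and
`ΔQ = [[0,0],[1,0]]`, one has `C = Σ + Uᵀ ΔQ V = (1)` with trivial SVD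
`U_C = Σ_C = V_C = (1)`, and the updated factors `Ũ = U U_C, Σ̃ = Σ_C, Ṽ = V V_C`
satisfy `Ũ Σ̃ Ṽᵀ = [[0,1],[0,0]] ≠ Q + ΔQ`, with spectral-norm error
`‖(Q+ΔQ) - Ũ Σ̃ Ṽᵀ‖₂ = 1`. -/
theorem incremental_svd_counterexample
    (Q dQ : Matrix (Fin 2) (Fin 2) ℝ) (hQ : Q = !![0, 1; 0, 0]) (hdQ : dQ = !![0, 0; 1, 0])
    (U V : Matrix (Fin 2) (Fin 1) ℝ) (hU : U = !![1; 0]) (hV : V = !![0; 1])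
    (Sig : Matrix (Fin 1) (Fin 1) ℝ) (hSig : Sig = !![1])
    (Cm : Matrix (Fin 1) (Fin 1) ℝ) (hCm : Cm = Sig + Uᵀ * dQ * V)
    (UC SC VC : Matrix (Fin 1) (Fin 1) ℝ)
    (hUC : UC = !![1]) (hSC : SC = !![1]) (hVC : VC = !![1]) :
    Cm = !![1] ∧
    Cm = UC * SC * VCᵀ ∧
    (U * UC) * SC * (V * VC)ᵀ = !![0, 1; 0, 0] ∧
    (U * UC) * SC * (V * VC)ᵀ ≠ Q + dQ ∧
    Q + dQ = !![0, 1; 1, 0] ∧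
    ‖(Q + dQ) - (U * UC) * SC * (V * VC)ᵀ‖ = 1 := by
  have hdQ_single : dQ = single 1 0 1 := by
    rw [hdQ]; ext i j; fin_cases i <;> fin_cases j <;> rfl
  have hproj : Uᵀ * dQ * V = 0 := by
    rw [hU, hV, hdQ]; ext i j; fin_cases i; fin_cases j; simp [mul_apply, Fin.sum_univ_two]
  have hC : Cm = !![1] := by rw [hCm, hproj, add_zero, hSig]
  have hSVD : Cm = UC * SC * VCᵀ := by
    rw [hC, hUC, hSC, hVC]; ext i j; fin_cases i; fin_cases j; simp [mul_apply]
  have hQ_SVD : U * Sig * Vᵀ = Q := by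
    rw [hU, hV, hSig, hQ]; ext i j; fin_cases i <;> fin_cases j <;> simp [mul_apply]
  have hupdate : (U * UC) * SC * (V * VC)ᵀ = Q := by
    rw [incremental_update_eq (hSVD ▸ hCm), hproj, Matrix.mul_zero, Matrix.zero_mul, add_zero,
      hQ_SVD]
  have hdQ_norm : ‖dQ‖ = 1 := by rw [hdQ_single, l2_opNorm_single, norm_one]
  have hdQ_ne : dQ ≠ 0 := norm_ne_zero_iff.mp (hdQ_norm ▸ one_ne_zero)
  refine ⟨hC, hSVD, hupdate.trans hQ, hupdate ▸ left_ne_add.mpr hdQ_ne, ?_, ?_⟩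
  · rw [hQ, hdQ]; ext i j; fin_cases i <;> fin_cases j <;> simp
  · rw [hupdate, add_sub_cancel_left, hdQ_norm]
end

section
/- Let S satisfy S = C Q S Q^T + (1−C) I_n with C ∈ (0,1) and Q̃ = Q + u v^T. Define z = S v, y = Q z, λ = v^T z, and T = u (Q S v)^T + (Q S v) u^T + (v^T S v)·u u^T. Then T is symmetric and T = u w^T + w u^T where w = y + (λ/2)u. Moreover, the SimRank change ΔS = S̃ − S satisfies the recursion ΔS = C Q̃ ΔS Q̃^T + C·T, where S̃ = C Q̃ S̃ Q̃^T + (1−C) I_n. -/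
open Matrix

lemma aux_mul_vecMulVec {n : ℕ} (M : Matrix (Fin n) (Fin n) ℝ) (a b : Fin n → ℝ) :
    M * vecMulVec a b = vecMulVec (M *ᵥ a) b := by
  ext i j
  simp [Matrix.mul_apply, vecMulVec_apply, Matrix.mulVec, dotProduct, Finset.sum_mul,
    mul_assoc]

lemma aux_vecMulVec_mul {n : ℕ} (M : Matrix (Fin n) (Fin n) ℝ) (a b : Fin n → ℝ) :
    vecMulVec a b * M = vecMulVec a (b ᵥ* M) := by
  ext i j
  simp [Matrix.mul_apply, vecMulVec_apply, Matrix.vecMul, dotProduct, Finset.mul_sum,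
    mul_assoc]

lemma aux_vecMulVec_transpose {n : ℕ} (a b : Fin n → ℝ) :
    (vecMulVec a b)ᵀ = vecMulVec b a := by
  ext i j
  simp [vecMulVec_apply, mul_comm]

lemma aux_vecMulVec_vecMulVec {n : ℕ} (a b c d : Fin n → ℝ) :
    vecMulVec a b * vecMulVec c d = (b ⬝ᵥ c) • vecMulVec a d := by
  ext i j
  simp [Matrix.mul_apply, vecMulVec_apply, dotProduct, Finset.sum_mul, Finset.mul_sum]
  apply Finset.sum_congr rfl
  intro k _
  ring

/-- with `z = S v`, `y = Q z`, `λ = vᵀ z`, and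
`T = u (Q S v)ᵀ + (Q S v) uᵀ + (vᵀ S v)·u uᵀ`, the matrix `T` is symmetric and equals
`u wᵀ + w uᵀ` with `w = y + (λ/2) u`; moreover the SimRank change `ΔS = S̃ - S` satisfies
`ΔS = C Q̃ ΔS Q̃ᵀ + C·T`. -/
theorem simrank_change_recursion {n : ℕ} (C : ℝ) (hC0 : 0 < C) (hC1 : C < 1)
    (Q Qt S St : Matrix (Fin n) (Fin n) ℝ) (u v : Fin n → ℝ)
    (hSsym : S.IsSymm)
    (hQt : Qt = Q + vecMulVec u v)
    (hS : S = C • (Q * S * Qᵀ) + (1 - C) • (1 : Matrix (Fin n) (Fin n) ℝ))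
    (hSt : St = C • (Qt * St * Qtᵀ) + (1 - C) • (1 : Matrix (Fin n) (Fin n) ℝ))
    (z : Fin n → ℝ) (hz : z = S *ᵥ v)
    (y : Fin n → ℝ) (hy : y = Q *ᵥ z)
    (lam : ℝ) (hlam : lam = v ⬝ᵥ z)
    (w : Fin n → ℝ) (hw : w = y + (lam / 2) • u)
    (T : Matrix (Fin n) (Fin n) ℝ)
    (hT : T = vecMulVec u (Q *ᵥ (S *ᵥ v)) + vecMulVec (Q *ᵥ (S *ᵥ v)) u +
      (v ⬝ᵥ (S *ᵥ v)) • vecMulVec u u) :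
    T.IsSymm ∧
    T = vecMulVec u w + vecMulVec w u ∧
    St - S = C • (Qt * (St - S) * Qtᵀ) + C • T := by
  have hvS : v ᵥ* S = S *ᵥ v := by
    rw [← Matrix.mulVec_transpose, hSsym.eq]
  -- key expansion
  have hkey : Qt * S * Qtᵀ = Q * S * Qᵀ + T := by
    subst hQt
    rw [transpose_add, aux_vecMulVec_transpose]
    rw [add_mul, mul_add, add_mul, add_mul]
    rw [aux_mul_vecMulVec (Q * S)]
    rw [aux_vecMulVec_mul _ u v, hvS]
    rw [aux_vecMulVec_mul _ u (S *ᵥ v), aux_vecMulVec_vecMulVec]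
    rw [Matrix.vecMul_transpose]
    rw [hT, Matrix.mulVec_mulVec, dotProduct_comm]
    abel
  refine ⟨?_, ?_, ?_⟩
  · rw [hT]
    unfold Matrix.IsSymm
    rw [transpose_add, transpose_add, transpose_smul, aux_vecMulVec_transpose,
      aux_vecMulVec_transpose, aux_vecMulVec_transpose]
    abel
  · subst hz hy hlam hw hT
    ext i j
    simp only [vecMulVec_apply, Matrix.add_apply, Pi.add_apply, Pi.smul_apply, smul_eq_mul,
      Matrix.smul_apply]
    ring
  · have h1 : St - S = C • (Qt * St * Qtᵀ) - C • (Q * S * Qᵀ) := by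
      conv_lhs => rw [hSt, hS]
      abel
    calc St - S = C • (Qt * St * Qtᵀ) - C • (Q * S * Qᵀ) := h1
      _ = C • (Qt * (St - S) * Qtᵀ) + C • T := by
          rw [Matrix.mul_sub, Matrix.sub_mul, smul_sub, hkey, smul_add]
          abel
end

section
/- Co-SimRank and Li et al.'s SimRank are proportional: if S solves S = C·Q S Q^T + (1−C)·I_n and S̃ solves S̃ = C·Q S̃ Q^T + I_n (both with C ∈ (0,1) and ‖Q‖ ≤ 1), then S = (1−C)·S̃. Consequently the two similarity measures induce identical rankings of node pairs. -/
open Matrix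
open scoped Matrix.Norms.L2Operator

/-!
`S` and `(1 - C) • S̃` both solve the Stein equation `X = C • (Q * X * Qᵀ) + (1 - C) • 1`.
Since `C ‖Q‖² < 1`, the map `X ↦ C • (Q * X * Qᵀ)` is a contraction for the L2 operator norm,
so this equation has at most one solution. Multiplying by `1 - C > 0` preserves the order of entries.
-/

namespace Matrix

variable {𝕜 m n : Type*} [RCLike 𝕜] [Fintype m] [DecidableEq m] [Fintype n] [DecidableEq n]

theorem l2_opNorm_mul_mul_conjTranspose_le (A : Matrix m n 𝕜) (X : Matrix n n 𝕜) :
    ‖A * X * Aᴴ‖ ≤ ‖A‖ ^ 2 * ‖X‖ :=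
  calc ‖A * X * Aᴴ‖ ≤ ‖A * X‖ * ‖Aᴴ‖ := l2_opNorm_mul _ _
    _ ≤ ‖A‖ * ‖X‖ * ‖A‖ := by
        rw [l2_opNorm_conjTranspose]
        gcongr
        exact l2_opNorm_mul _ _
    _ = ‖A‖ ^ 2 * ‖X‖ := by ring

theorem eq_zero_of_eq_smul_mul_mul_conjTranspose {c : 𝕜} {A : Matrix n n 𝕜} {D : Matrix n n 𝕜}
    (hc : ‖c‖ * ‖A‖ ^ 2 < 1) (hD : D = c • (A * D * Aᴴ)) : D = 0 := by
  have hle : ‖D‖ ≤ ‖c‖ * ‖A‖ ^ 2 * ‖D‖ :=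
    calc ‖D‖ = ‖c‖ * ‖A * D * Aᴴ‖ := by rw [← norm_smul, ← hD]
      _ ≤ ‖c‖ * (‖A‖ ^ 2 * ‖D‖) := by
          gcongr
          exact l2_opNorm_mul_mul_conjTranspose_le A D
      _ = ‖c‖ * ‖A‖ ^ 2 * ‖D‖ := by ring
  have hD0 : ‖D‖ ≤ 0 := by nlinarith [norm_nonneg D]
  exact norm_le_zero_iff.mp hD0

theorem eq_of_stein_eq {c : 𝕜} {A : Matrix n n 𝕜} {B X Y : Matrix n n 𝕜}
    (hc : ‖c‖ * ‖A‖ ^ 2 < 1) (hX : X = c • (A * X * Aᴴ) + B) (hY : Y = c • (A * Y * Aᴴ) + B) :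
    X = Y := by
  refine sub_eq_zero.mp (eq_zero_of_eq_smul_mul_mul_conjTranspose hc ?_)
  conv_lhs => rw [hX, hY]
  simp only [Matrix.mul_sub, Matrix.sub_mul, smul_sub]
  abel

end Matrix

/-- Li et al.'s SimRank `S` (solving `S = C Q S Qᵀ + (1-C) I`) and Co-SimRank
`S̃` (solving `S̃ = C Q S̃ Qᵀ + I`) are proportional: `S = (1-C)·S̃`; consequently the two
measures induce identical rankings of node pairs. -/
theorem simrank_cosimrank_proportional {n : ℕ} (C : ℝ) (hC0 : 0 < C) (hC1 : C < 1)
    (Q S St : Matrix (Fin n) (Fin n) ℝ) (hQ : ‖Q‖ ≤ 1)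
    (hS : S = C • (Q * S * Qᵀ) + (1 - C) • (1 : Matrix (Fin n) (Fin n) ℝ))
    (hSt : St = C • (Q * St * Qᵀ) + (1 : Matrix (Fin n) (Fin n) ℝ)) :
    S = (1 - C) • St ∧
    ∀ a b c d : Fin n, S a b ≤ S c d ↔ St a b ≤ St c d := by
  have hcontr : ‖C‖ * ‖Q‖ ^ 2 < 1 := by
    have hQ2 : ‖Q‖ ^ 2 ≤ 1 := pow_le_one₀ (norm_nonneg Q) hQ
    rw [Real.norm_of_nonneg hC0.le]
    nlinarith
  have hScaled : (1 - C) • St = C • (Q * ((1 - C) • St) * Qᴴ) + (1 - C) • 1 := by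
    conv_lhs => rw [hSt]
    rw [conjTranspose_eq_transpose_of_trivial, Matrix.mul_smul, Matrix.smul_mul, smul_add,
      smul_comm C (1 - C)]
  have hprop : S = (1 - C) • St := by
    rw [← conjTranspose_eq_transpose_of_trivial] at hS
    exact eq_of_stein_eq hcontr hS hScaled
  refine ⟨hprop, fun a b c d => ?_⟩
  simp only [hprop, Matrix.smul_apply, smul_eq_mul]
  exact mul_le_mul_iff_right₀ (sub_pos.mpr hC1)
end
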